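/- arXiv:1408.1887 — 3 statements merged into one kernel-verified Lean document; each statement's English description precedes it below -/
import Mathlib

section
/- Let h : ℝ^d → ℝ be continuously differentiable with L_h-Lipschitz continuous gradient, let Ω ⊆ ℝ^d be nonempty and closed, and fix t > L_h. Then for any u ∈ Ω and any u⁺ ∈ P_Ω(u - (1/t)∇h(u)) (a projection of the gradient step onto Ω), we have h(u⁺) ≤ h(u) - (1/2)(t - L_h)‖u⁺ - u‖². -/
/-! The quadratic upper bound ("descent lemma") for a function with `L`-Lipschitz gradient gives
`h u⁺ ≤ h u + ⟪∇h u, u⁺ - u⟫ + L/2 ‖u⁺ - u‖²`. Comparing `u⁺` with the competitor `u ∈ Ω` in the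
projection problem gives `⟪∇h u, u⁺ - u⟫ ≤ -t/2 ‖u⁺ - u‖²`; no convexity of `Ω` is needed for this.
Adding the two inequalities yields the claim. -/

open InnerProductSpace Set

variable {F : Type*} [NormedAddCommGroup F] [InnerProductSpace ℝ F]

theorem hasDerivAt_comp_add_smul_of_hasGradientAt [CompleteSpace F] {h : F → ℝ} {g : F → F}
    (hgrad : ∀ u, HasGradientAt h (g u) u) (x v : F) (s : ℝ) :
    HasDerivAt (fun s : ℝ => h (x + s • v)) (⟪g (x + s • v), v⟫_ℝ) s := by
  have hline : HasDerivAt (fun s : ℝ => x + s • v) v s := by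
    simpa using ((hasDerivAt_id s).smul_const v).const_add x
  have hcomp := (hgrad (x + s • v)).hasFDerivAt.comp_hasDerivAt s hline
  simp only [toDual_apply_apply] at hcomp
  exact hcomp

theorem inner_sub_le_of_norm_sub_le_mul {g : F → F} {L : ℝ}
    (hLip : ∀ u v, ‖g u - g v‖ ≤ L * ‖u - v‖) (x v : F) {s : ℝ} (hs : 0 ≤ s) :
    ⟪g (x + s • v), v⟫_ℝ - ⟪g x, v⟫_ℝ ≤ L * ‖v‖ ^ 2 * s := by
  have hstep : ‖x + s • v - x‖ = s * ‖v‖ := by simp [norm_smul, abs_of_nonneg hs]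
  calc ⟪g (x + s • v), v⟫_ℝ - ⟪g x, v⟫_ℝ = ⟪g (x + s • v) - g x, v⟫_ℝ := (inner_sub_left ..).symm
    _ ≤ ‖g (x + s • v) - g x‖ * ‖v‖ := real_inner_le_norm _ _
    _ ≤ L * ‖x + s • v - x‖ * ‖v‖ := by gcongr; exact hLip _ _
    _ = L * ‖v‖ ^ 2 * s := by rw [hstep]; ring

/-- The descent lemma. -/
theorem le_add_inner_add_of_norm_sub_le_mul [CompleteSpace F] {h : F → ℝ} {g : F → F}
    (hgrad : ∀ u, HasGradientAt h (g u) u) {L : ℝ}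
    (hLip : ∀ u v, ‖g u - g v‖ ≤ L * ‖u - v‖) (x y : F) :
    h y ≤ h x + ⟪g x, y - x⟫_ℝ + L / 2 * ‖y - x‖ ^ 2 := by
  set v := y - x
  let φ : ℝ → ℝ := fun s => h (x + s • v) - s * ⟪g x, v⟫_ℝ - L * ‖v‖ ^ 2 * s ^ 2 / 2
  have hφ : ∀ s : ℝ, HasDerivAt φ (⟪g (x + s • v), v⟫_ℝ - ⟪g x, v⟫_ℝ - L * ‖v‖ ^ 2 * s) s := by
    intro s
    have hquad : HasDerivAt (fun s : ℝ => L * ‖v‖ ^ 2 * s ^ 2 / 2) (L * ‖v‖ ^ 2 * s) s :=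
      (((hasDerivAt_pow 2 s).const_mul (L * ‖v‖ ^ 2)).div_const 2).congr_deriv (by push_cast; ring)
    exact ((hasDerivAt_comp_add_smul_of_hasGradientAt hgrad x v s).sub
      ((hasDerivAt_id s).mul_const _ |>.congr_deriv (one_mul _))).sub hquad
  have hanti : AntitoneOn φ (Icc 0 1) := by
    apply antitoneOn_of_deriv_nonpos (convex_Icc 0 1)
      (fun s _ => (hφ s).continuousAt.continuousWithinAt)
      (fun s _ => (hφ s).differentiableAt.differentiableWithinAt)
    intro s hs
    rw [interior_Icc] at hs
    rw [(hφ s).deriv, sub_nonpos]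
    exact inner_sub_le_of_norm_sub_le_mul hLip x v hs.1.le
  have hφ01 : φ 1 ≤ φ 0 := hanti (left_mem_Icc.2 zero_le_one) (right_mem_Icc.2 zero_le_one) zero_le_one
  simp only [φ, zero_smul, add_zero, zero_mul, one_smul, one_mul, mul_one, sq,
    mul_zero, zero_div, sub_zero, v, add_sub_cancel] at hφ01
  linarith

theorem inner_le_of_norm_sub_le {u up g : F} {t : ℝ} (ht : 0 < t)
    (hcloser : ‖up - (u - (1 / t) • g)‖ ≤ ‖u - (u - (1 / t) • g)‖) :
    ⟪g, up - u⟫_ℝ ≤ -(t / 2) * ‖up - u‖ ^ 2 := by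
  rw [sub_sub_cancel, sub_sub_eq_add_sub, add_sub_right_comm] at hcloser
  have hsq := pow_le_pow_left₀ (norm_nonneg _) hcloser 2
  rw [norm_add_sq_real, real_inner_smul_right, real_inner_comm] at hsq
  have hscaled : 1 / t * ⟪g, up - u⟫_ℝ ≤ -‖up - u‖ ^ 2 / 2 := by linarith
  calc ⟪g, up - u⟫_ℝ = t * (1 / t * ⟪g, up - u⟫_ℝ) := by field_simp
    _ ≤ t * (-‖up - u‖ ^ 2 / 2) := by gcongr
    _ = -(t / 2) * ‖up - u‖ ^ 2 := by ring

theorem stmt_0_general {d : ℕ} (h : EuclideanSpace ℝ (Fin d) → ℝ)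
    (g : EuclideanSpace ℝ (Fin d) → EuclideanSpace ℝ (Fin d))
    (hgrad : ∀ u, HasGradientAt h (g u) u)
    (L t : ℝ)
    (hLip : ∀ u v, ‖g u - g v‖ ≤ L * ‖u - v‖)
    (ht : L < t)
    (Ω : Set (EuclideanSpace ℝ (Fin d)))
    (u : EuclideanSpace ℝ (Fin d)) (hu : u ∈ Ω)
    (up : EuclideanSpace ℝ (Fin d))
    (hproj : ∀ w ∈ Ω, ‖up - (u - (1/t) • g u)‖ ≤ ‖w - (u - (1/t) • g u)‖) :
    h up ≤ h u - (1/2) * (t - L) * ‖up - u‖^2 := by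
  rcases eq_or_ne up u with rfl | hne
  · simp
  have hL : 0 ≤ L := by
    have := (norm_nonneg _).trans (hLip up u)
    exact nonneg_of_mul_nonneg_left this (norm_pos_iff.2 (sub_ne_zero.2 hne))
  have hdescent := le_add_inner_add_of_norm_sub_le_mul hgrad hLip u up
  have hinner := inner_le_of_norm_sub_le (hL.trans_lt ht) (hproj u hu)
  linarith

/-- **Sufficient decrease property** (Lemma: projected gradient step onto a nonempty
closed, possibly nonconvex, set). -/
theorem stmt_0 {d : ℕ} (h : EuclideanSpace ℝ (Fin d) → ℝ)
    (g : EuclideanSpace ℝ (Fin d) → EuclideanSpace ℝ (Fin d))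
    (hC1 : ContDiff ℝ 1 h)
    (hgrad : ∀ u, HasGradientAt h (g u) u)
    (L t : ℝ)
    (hLip : ∀ u v, ‖g u - g v‖ ≤ L * ‖u - v‖)
    (ht : L < t)
    (Ω : Set (EuclideanSpace ℝ (Fin d)))
    (hne : Ω.Nonempty) (hcl : IsClosed Ω)
    (u : EuclideanSpace ℝ (Fin d)) (hu : u ∈ Ω)
    (up : EuclideanSpace ℝ (Fin d))
    (hupmem : up ∈ Ω)
    (hproj : ∀ w ∈ Ω, ‖up - (u - (1/t) • g u)‖ ≤ ‖w - (u - (1/t) • g u)‖) :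
    h up ≤ h u - (1/2) * (t - L) * ‖up - u‖^2 :=
  stmt_0_general h g hgrad L t hLip ht Ω u hu up hproj
end

section
/- Let F(x, y, z) = Σ_{j=1}^m ‖S_j(x) ⊙ y - z_j‖² on ℂⁿ × ℂⁿ × (ℂⁿ)^m, where each S_j is a permutation operator on ℂⁿ. Then for fixed y ∈ ℂⁿ and z ∈ (ℂⁿ)^m, the map x ↦ ∇_x F(x, y, z) is Lipschitz continuous with (best) Lipschitz constant L_x(y, z) = 2‖Σ_{j=1}^m S_j*(ȳ ⊙ y)‖_∞. -/
/-!
With `A_j x = S_j(x) ⊙ y`, the gradient is `G x = 2 Σ_j A_j*(A_j x - z_j)`, so `G` is affine with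
linear part `2 Σ_j A_j* A_j`. Each `A_j* A_j` multiplies coordinatewise by `S_j*(ȳ ⊙ y)`, so the
linear part is the diagonal matrix with diagonal `2 Σ_j S_j*(ȳ ⊙ y)`. The best Lipschitz constant
of an affine map is the operator norm of its linear part, and the `ℓ²` operator norm of a diagonal
matrix is the sup norm of its diagonal.
-/

open scoped ComplexConjugate InnerProductSpace
open Matrix WithLp

theorem HasGradientAt.fun_sum {𝕜 F ι : Type*} [RCLike 𝕜] [NormedAddCommGroup F]
    [InnerProductSpace 𝕜 F] [CompleteSpace F] {u : Finset ι} {f : ι → F → 𝕜} {f' : ι → F}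
    {x : F} (h : ∀ i ∈ u, HasGradientAt (f i) (f' i) x) :
    HasGradientAt (fun y => ∑ i ∈ u, f i y) (∑ i ∈ u, f' i) x := by
  rw [hasGradientAt_iff_hasFDerivAt, map_sum]
  exact HasFDerivAt.fun_sum fun i hi => (h i hi).hasFDerivAt

theorem pi_norm_eq_iSup {ι : Type*} [Fintype ι] {E : Type*} [SeminormedAddCommGroup E]
    (v : ι → E) : ‖v‖ = ⨆ i, ‖v i‖ :=
  le_antisymm
    ((pi_norm_le_iff_of_nonneg (Real.iSup_nonneg fun i => norm_nonneg (v i))).mpr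
      fun i => le_ciSup (f := fun i => ‖v i‖) (Set.finite_range _).bddAbove i)
    (Real.iSup_le (norm_le_pi_norm v) (norm_nonneg v))

theorem ContinuousLinearMap.opNorm_best_lipschitz_of_sub_eq {𝕜 E F : Type*}
    [NontriviallyNormedField 𝕜] [SeminormedAddCommGroup E] [NormedSpace 𝕜 E]
    [SeminormedAddCommGroup F] [NormedSpace 𝕜 F] {G : E → F} (D : E →L[𝕜] F)
    (hG : ∀ a b, G a - G b = D (a - b)) :
    (∀ a b, ‖G a - G b‖ ≤ ‖D‖ * ‖a - b‖) ∧
      ∀ K : ℝ, 0 ≤ K → (∀ a b, ‖G a - G b‖ ≤ K * ‖a - b‖) → ‖D‖ ≤ K := by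
  refine ⟨fun a b => hG a b ▸ D.le_opNorm (a - b), fun K hK hGK => ?_⟩
  exact D.opNorm_le_bound hK fun v => by simpa [hG] using hGK v 0

open scoped Matrix.Norms.L2Operator in
theorem Matrix.opNorm_toEuclideanCLM_diagonal {ι 𝕜 : Type*} [Fintype ι] [DecidableEq ι]
    [RCLike 𝕜] (v : ι → 𝕜) : ‖toEuclideanCLM (n := ι) (𝕜 := 𝕜) (diagonal v)‖ = ⨆ i, ‖v i‖ := by
  rw [l2_opNorm_toEuclideanCLM, l2_opNorm_diagonal, pi_norm_eq_iSup]

namespace EuclideanSpace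

variable {ι κ : Type*} [Fintype ι] [Fintype κ]

theorem real_inner_eq_re_inner (u v : EuclideanSpace ℂ ι) : ⟪u, v⟫_ℝ = (⟪u, v⟫_ℂ).re := by
  simp only [PiLp.inner_apply, Complex.inner, RCLike.inner_apply, Complex.re_sum]

theorem hasGradientAt_norm_sub_sq (A : EuclideanSpace ℂ ι →L[ℂ] EuclideanSpace ℂ κ)
    (z : EuclideanSpace ℂ κ) (x : EuclideanSpace ℂ ι) :
    HasGradientAt (fun x => ‖A x - z‖ ^ 2) ((2 : ℂ) • A.adjoint (A x - z)) x := by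
  rw [hasGradientAt_iff_hasFDerivAt]
  refine ((A.restrictScalars ℝ).hasFDerivAt.sub_const z).norm_sq.congr_fderiv ?_
  ext h
  simp [real_inner_eq_re_inner, ContinuousLinearMap.adjoint_inner_left, mul_comm]

/-- The paper's `S_j(x) ⊙ y` is `permMul (S j) y x`. -/
noncomputable def permMul (σ : Equiv.Perm ι) (y : EuclideanSpace ℂ ι) :
    EuclideanSpace ℂ ι →L[ℂ] EuclideanSpace ℂ ι :=
  LinearMap.toContinuousLinearMap
    { toFun x := toLp 2 fun i => x (σ i) * y i
      map_add' a b := by ext i; simp [add_mul]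
      map_smul' c a := by ext i; simp [mul_assoc] }

@[simp]
theorem permMul_apply (σ : Equiv.Perm ι) (y x : EuclideanSpace ℂ ι) (i : ι) :
    permMul σ y x i = x (σ i) * y i := rfl

theorem adjoint_permMul (σ : Equiv.Perm ι) (y : EuclideanSpace ℂ ι) :
    (permMul σ y).adjoint = permMul σ.symm (toLp 2 fun i => conj (y (σ.symm i))) := by
  refine ((ContinuousLinearMap.eq_adjoint_iff _ _).mpr fun u v => ?_).symm
  simp only [PiLp.inner_apply, permMul_apply, RCLike.inner_apply]
  rw [← Equiv.sum_comp σ]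
  refine Finset.sum_congr rfl fun i _ => ?_
  simp only [σ.symm_apply_apply, map_mul, Complex.conj_conj]
  ring

theorem adjoint_permMul_comp_permMul [DecidableEq ι] (σ : Equiv.Perm ι)
    (y : EuclideanSpace ℂ ι) :
    (permMul σ y).adjoint ∘L permMul σ y =
      toEuclideanCLM (n := ι) (𝕜 := ℂ) (diagonal fun i => conj (y (σ.symm i)) * y (σ.symm i)) := by
  ext1 x; ext i
  simp only [adjoint_permMul, ContinuousLinearMap.comp_apply, permMul_apply,
    Equiv.apply_symm_apply, ofLp_toEuclideanCLM, mulVec_diagonal]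
  ring

theorem sum_adjoint_permMul_comp_permMul [DecidableEq ι] (S : κ → Equiv.Perm ι)
    (y : EuclideanSpace ℂ ι) :
    ∑ j, (permMul (S j) y).adjoint ∘L permMul (S j) y =
      toEuclideanCLM (n := ι) (𝕜 := ℂ)
        (diagonal fun i => ∑ j, conj (y ((S j).symm i)) * y ((S j).symm i)) := by
  ext1 x; ext i
  simp [adjoint_permMul_comp_permMul, mulVec_diagonal, Finset.sum_mul]

end EuclideanSpace

/-- For `F(x) = Σ_j ‖S_j(x) ⊙ y - z_j‖²` with `y`, `z` fixed, the gradient map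
`x ↦ ∇ₓF(x, y, z)` is Lipschitz with best constant `2‖Σ_j S_j*(ȳ ⊙ y)‖_∞`. -/
theorem stmt_4 {n m : ℕ} (S : Fin m → Equiv.Perm (Fin n))
    (y : EuclideanSpace ℂ (Fin n)) (z : Fin m → EuclideanSpace ℂ (Fin n))
    (F : EuclideanSpace ℂ (Fin n) → ℝ)
    (hF : F = fun x => ∑ j,
      ‖(WithLp.equiv 2 (Fin n → ℂ)).symm (fun i => x (S j i) * y i) - z j‖^2)
    (G : EuclideanSpace ℂ (Fin n) → EuclideanSpace ℂ (Fin n))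
    (hG : ∀ x, HasGradientAt F (G x) x)
    (Lx : ℝ)
    (hLx : Lx = 2 * ⨆ i, ‖∑ j, (starRingEnd ℂ) (y ((S j).symm i)) * y ((S j).symm i)‖) :
    (∀ a b, ‖G a - G b‖ ≤ Lx * ‖a - b‖) ∧
      ∀ K : ℝ, 0 ≤ K → (∀ a b, ‖G a - G b‖ ≤ K * ‖a - b‖) → Lx ≤ K := by
  subst hF hLx
  set A := fun j => EuclideanSpace.permMul (S j) y
  have hGx : ∀ x, G x = ∑ j, (2 : ℂ) • (A j).adjoint (A j x - z j) := fun x =>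
    (hG x).unique <| HasGradientAt.fun_sum fun j _ =>
      EuclideanSpace.hasGradientAt_norm_sub_sq (A j) (z j) x
  set D := (2 : ℂ) • ∑ j, (A j).adjoint ∘L A j
  have hGD : ∀ a b, G a - G b = D (a - b) := fun a b => by
    simp [D, hGx, ← Finset.sum_sub_distrib, ← smul_sub, map_sub, Finset.smul_sum]
  have hD : ‖D‖ = 2 * ⨆ i, ‖∑ j, (starRingEnd ℂ) (y ((S j).symm i)) * y ((S j).symm i)‖ := by
    rw [norm_smul, EuclideanSpace.sum_adjoint_permMul_comp_permMul,
      Matrix.opNorm_toEuclideanCLM_diagonal]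
    norm_num
  exact hD ▸ D.opNorm_best_lipschitz_of_sub_eq hGD
end

section
/- Let h : ℝ^d → ℝ be continuously differentiable with L-Lipschitz gradient, Ω ⊆ ℝ^d nonempty closed, α > 1, η > 0, and set t = α·max{L, η}. Then for any u ∈ Ω and u⁺ ∈ P_Ω(u - (1/t)∇h(u)), one has h(u⁺) ≤ h(u) - (1/2)(α - 1)η ‖u⁺ - u‖². -/
/-!
The descent lemma bounds `h u⁺` by `h u + ⟪∇h u, u⁺ - u⟫ + (L/2)‖u⁺ - u‖²`. Since `u ∈ Ω`, the
projected point `u⁺` is at least as close to `u - (1/t)∇h u` as `u` is; expanding the squares gives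
`⟪∇h u, u⁺ - u⟫ ≤ -(t/2)‖u⁺ - u‖²`, and `t - L ≥ (α - 1)η` finishes the estimate.
-/

open InnerProductSpace

section

variable {F : Type*} [NormedAddCommGroup F] [InnerProductSpace ℝ F]

theorem inner_le_neg_mul_norm_sq_of_norm_sub_le {x p v : F} {t : ℝ} (ht : 0 < t)
    (h : ‖p - (x - (1 / t) • v)‖ ≤ ‖x - (x - (1 / t) • v)‖) :
    ⟪v, p - x⟫_ℝ ≤ -(t / 2) * ‖p - x‖ ^ 2 := by
  rw [sub_sub_cancel, sub_sub_eq_add_sub, add_comm, add_sub_assoc, add_comm] at h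
  have hsq := pow_le_pow_left₀ (norm_nonneg _) h 2
  rw [norm_add_sq_real, real_inner_smul_right, real_inner_comm] at hsq
  have key : ‖p - x‖ ^ 2 + 2 * (1 / t * ⟪v, p - x⟫_ℝ) ≤ 0 := by linarith
  have := mul_le_mul_of_nonneg_left key ht.le
  field_simp at this
  linarith

variable [CompleteSpace F]

theorem le_add_inner_add_of_lipschitz_gradient {f : F → ℝ} {g : F → F} {L : ℝ}
    (hf : ∀ x, HasGradientAt f (g x) x) (hg : ∀ x y, ‖g x - g y‖ ≤ L * ‖x - y‖) (x y : F) :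
    f y ≤ f x + ⟪g x, y - x⟫_ℝ + L / 2 * ‖y - x‖ ^ 2 := by
  set v := y - x
  -- The claim is `φ 1 ≤ φ 0`; the Lipschitz bound makes `φ` antitone on `[0, 1]`.
  set φ : ℝ → ℝ := fun s => f (x + s • v) - s * ⟪g x, v⟫_ℝ - L / 2 * s ^ 2 * ‖v‖ ^ 2
  have hφ : ∀ s, HasDerivAt φ (⟪g (x + s • v), v⟫_ℝ - ⟪g x, v⟫_ℝ - L * s * ‖v‖ ^ 2) s := by
    intro s
    have hline : HasDerivAt (fun s : ℝ => x + s • v) v s := by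
      simpa using ((hasDerivAt_id s).smul_const v).const_add x
    have hf_line := (hf (x + s • v)).hasFDerivAt.comp_hasDerivAt s hline
    simp only [toDual_apply_apply] at hf_line
    exact ((hf_line.sub ((hasDerivAt_id s).mul_const ⟪g x, v⟫_ℝ)).sub
      (((hasDerivAt_pow 2 s).const_mul (L / 2)).mul_const (‖v‖ ^ 2))).congr_deriv
      (by push_cast; ring)
  have hφ_deriv_nonpos : ∀ s ∈ interior (Set.Icc (0 : ℝ) 1), deriv φ s ≤ 0 := by
    intro s hs
    rw [interior_Icc] at hs
    rw [(hφ s).deriv, ← inner_sub_left, sub_nonpos]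
    calc ⟪g (x + s • v) - g x, v⟫_ℝ ≤ ‖g (x + s • v) - g x‖ * ‖v‖ := real_inner_le_norm _ _
      _ ≤ L * ‖(x + s • v) - x‖ * ‖v‖ := by gcongr; exact hg _ _
      _ = L * s * ‖v‖ ^ 2 := by
        rw [add_sub_cancel_left, norm_smul, Real.norm_of_nonneg hs.1.le]; ring
  have hφ_anti := antitoneOn_of_deriv_nonpos (convex_Icc 0 1)
    (fun s _ => (hφ s).continuousAt.continuousWithinAt)
    (fun s _ => (hφ s).differentiableAt.differentiableWithinAt) hφ_deriv_nonpos
    (Set.left_mem_Icc.2 zero_le_one) (Set.right_mem_Icc.2 zero_le_one) zero_le_one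
  simp only [φ, v, one_smul, zero_smul, add_zero, add_sub_cancel, one_mul, one_pow, mul_one,
    zero_mul, sub_zero, ne_eq, OfNat.ofNat_ne_zero, not_false_eq_true, zero_pow, mul_zero,
    tsub_le_iff_right] at hφ_anti
  linarith

end

theorem stmt_10_general {d : ℕ} (h : EuclideanSpace ℝ (Fin d) → ℝ)
    (g : EuclideanSpace ℝ (Fin d) → EuclideanSpace ℝ (Fin d))
    (hgrad : ∀ u, HasGradientAt h (g u) u)
    (L : ℝ)
    (hLip : ∀ u v, ‖g u - g v‖ ≤ L * ‖u - v‖)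
    (α η t : ℝ) (hα : 1 < α) (hη : 0 < η) (ht : t = α * max L η)
    (Ω : Set (EuclideanSpace ℝ (Fin d)))
    (u : EuclideanSpace ℝ (Fin d)) (hu : u ∈ Ω)
    (up : EuclideanSpace ℝ (Fin d))
    (hproj : ∀ w ∈ Ω, ‖up - (u - (1/t) • g u)‖ ≤ ‖w - (u - (1/t) • g u)‖) :
    h up ≤ h u - (1/2) * (α - 1) * η * ‖up - u‖^2 := by
  have ht_pos : 0 < t := ht ▸ mul_pos (by linarith) (lt_max_of_lt_right hη)
  have hL_add : L + (α - 1) * η ≤ t := by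
    have := le_max_left L η
    have := le_max_right L η
    nlinarith
  have hdescent := le_add_inner_add_of_lipschitz_gradient hgrad hLip u up
  have hstep := inner_le_neg_mul_norm_sq_of_norm_sub_le ht_pos (hproj u hu)
  linarith [mul_le_mul_of_nonneg_right hL_add (sq_nonneg ‖up - u‖)]

/-- Per-block sufficient decrease estimate for the PHeBIE algorithm: a projected
gradient step with stepsize `1/t`, `t = α·max{L, η}`, decreases `h` by at least
`(1/2)(α-1)η‖u⁺ - u‖²`. -/
theorem stmt_10 {d : ℕ} (h : EuclideanSpace ℝ (Fin d) → ℝ)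
    (g : EuclideanSpace ℝ (Fin d) → EuclideanSpace ℝ (Fin d))
    (hC1 : ContDiff ℝ 1 h)
    (hgrad : ∀ u, HasGradientAt h (g u) u)
    (L : ℝ) (hL : 0 ≤ L)
    (hLip : ∀ u v, ‖g u - g v‖ ≤ L * ‖u - v‖)
    (α η t : ℝ) (hα : 1 < α) (hη : 0 < η) (ht : t = α * max L η)
    (Ω : Set (EuclideanSpace ℝ (Fin d)))
    (hne : Ω.Nonempty) (hcl : IsClosed Ω)
    (u : EuclideanSpace ℝ (Fin d)) (hu : u ∈ Ω)
    (up : EuclideanSpace ℝ (Fin d))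
    (hupmem : up ∈ Ω)
    (hproj : ∀ w ∈ Ω, ‖up - (u - (1/t) • g u)‖ ≤ ‖w - (u - (1/t) • g u)‖) :
    h up ≤ h u - (1/2) * (α - 1) * η * ‖up - u‖^2 :=
  stmt_10_general h g hgrad L hLip α η t hα hη ht Ω u hu up hproj
end
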